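/- arXiv:2210.02310 — 2 statements merged into one kernel-verified Lean document; each statement's English description precedes it below -/
import Mathlib

section
/- Product rule for monomials in the θ-deformed 2n-plane: for multi-indices (p_1,...,p_n,q_1,...,q_n) and (r_1,...,r_n,s_1,...,s_n) in ℕ^{2n}, the product (z_1^{p_1}···z_n^{p_n} z̄_1^{q_1}···z̄_n^{q_n})(z_1^{r_1}···z_n^{r_n} z̄_1^{s_1}···z̄_n^{s_n}) equals (∏_{l=1}^n ∏_{k=l+1}^n λ_{k,l}^{p_k r_l + q_k s_l + r_k q_l − q_k r_l}) · z_1^{p_1+r_1}···z_n^{p_n+r_n} z̄_1^{q_1+s_1}···z̄_n^{q_n+s_n}. -/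
open Complex

section Aux

variable {A : Type*} [Ring A] [Algebra ℂ A]

lemma aux_pow_comm (x y : A) (c : ℂ) (h : x * y = c • (y * x)) (a b : ℕ) :
    x ^ a * y ^ b = c ^ (a * b) • (y ^ b * x ^ a) := by
  have h1 : ∀ a : ℕ, x ^ a * y = c ^ a • (y * x ^ a) := by
    intro a
    induction a with
    | zero => simp
    | succ a ih =>
      rw [pow_succ, mul_assoc, h, mul_smul_comm, ← mul_assoc, ih,
        smul_mul_assoc, smul_smul, mul_assoc, ← pow_succ, ← pow_succ']
  induction b with
  | zero => simp
  | succ b ih =>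
    rw [pow_succ, ← mul_assoc, ih, smul_mul_assoc, mul_assoc, h1, mul_smul_comm,
      smul_smul, ← pow_add, ← mul_assoc, ← pow_succ]
    ring_nf

lemma aux_mul_ofFn {n : ℕ} (w : Fin n → A) (x : A) (d : Fin n → ℂ)
    (h : ∀ l, x * w l = d l • (w l * x)) :
    x * (List.ofFn w).prod = (∏ l, d l) • ((List.ofFn w).prod * x) := by
  induction n with
  | zero => simp
  | succ n ih =>
    rw [List.ofFn_succ, List.prod_cons, ← mul_assoc, h 0, smul_mul_assoc,
      mul_assoc, ih (fun i => w i.succ) (fun i => d i.succ) (fun l => h l.succ),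
      mul_smul_comm, smul_smul, Fin.prod_univ_succ, ← mul_assoc]

lemma aux_ofFn_mul {n : ℕ} (w : Fin n → A) (x : A) (d : Fin n → ℂ)
    (h : ∀ l, w l * x = d l • (x * w l)) :
    (List.ofFn w).prod * x = (∏ l, d l) • (x * (List.ofFn w).prod) := by
  induction n with
  | zero => simp
  | succ n ih =>
    rw [List.ofFn_succ, List.prod_cons, mul_assoc,
      ih (fun i => w i.succ) (fun i => d i.succ) (fun l => h l.succ),
      mul_smul_comm, ← mul_assoc, h 0, smul_mul_assoc, smul_smul,
      Fin.prod_univ_succ, mul_assoc, mul_comm (d 0)]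

lemma aux_swap {m n : ℕ} (u : Fin m → A) (v : Fin n → A) (a : Fin m → ℕ) (b : Fin n → ℕ)
    (c : Fin m → Fin n → ℂ) (h : ∀ k l, u k * v l = c k l • (v l * u k)) :
    (List.ofFn fun i => u i ^ a i).prod * (List.ofFn fun i => v i ^ b i).prod =
      (∏ k, ∏ l, c k l ^ (a k * b l)) •
        ((List.ofFn fun i => v i ^ b i).prod * (List.ofFn fun i => u i ^ a i).prod) := by
  induction m with
  | zero => simp
  | succ m ih =>
    rw [List.ofFn_succ, List.prod_cons, mul_assoc,
      ih (fun i => u i.succ) (fun i => a i.succ) (fun i l => c i.succ l)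
        (fun k l => h k.succ l),
      mul_smul_comm, ← mul_assoc,
      aux_mul_ofFn (fun l => v l ^ b l) (u 0 ^ a 0) (fun l => c 0 l ^ (a 0 * b l))
        (fun l => aux_pow_comm (u 0) (v l) (c 0 l) (h 0 l) (a 0) (b l)),
      smul_mul_assoc, smul_smul, Fin.prod_univ_succ, mul_assoc, mul_comm (∏ k : Fin m, _)]

lemma aux_merge {n : ℕ} (w : Fin n → A) (e f : Fin n → ℕ) (c : Fin n → Fin n → ℂ)
    (h : ∀ k l, w k * w l = c k l • (w l * w k)) :
    (List.ofFn fun i => w i ^ e i).prod * (List.ofFn fun i => w i ^ f i).prod =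
      (∏ l, ∏ k ∈ Finset.Ioi l, c k l ^ (e k * f l)) •
        (List.ofFn fun i => w i ^ (e i + f i)).prod := by
  induction n with
  | zero => simp
  | succ n ih =>
    simp only [List.ofFn_succ, List.prod_cons]
    have step : (List.ofFn fun i => w i.succ ^ e i.succ).prod * w 0 ^ f 0 =
        (∏ l : Fin n, c l.succ 0 ^ (e l.succ * f 0)) •
          (w 0 ^ f 0 * (List.ofFn fun i => w i.succ ^ e i.succ).prod) :=
      aux_ofFn_mul (fun i => w i.succ ^ e i.succ) (w 0 ^ f 0)
        (fun l => c l.succ 0 ^ (e l.succ * f 0))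
        (fun l => aux_pow_comm (w l.succ) (w 0) (c l.succ 0) (h l.succ 0) (e l.succ) (f 0))
    calc (w 0 ^ e 0 * (List.ofFn fun i => w i.succ ^ e i.succ).prod) *
            (w 0 ^ f 0 * (List.ofFn fun i => w i.succ ^ f i.succ).prod)
        = w 0 ^ e 0 * (((List.ofFn fun i => w i.succ ^ e i.succ).prod * w 0 ^ f 0) *
            (List.ofFn fun i => w i.succ ^ f i.succ).prod) := by
          rw [mul_assoc, mul_assoc]
      _ = (∏ l : Fin n, c l.succ 0 ^ (e l.succ * f 0)) •
            (w 0 ^ (e 0 + f 0) * ((List.ofFn fun i => w i.succ ^ e i.succ).prod *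
              (List.ofFn fun i => w i.succ ^ f i.succ).prod)) := by
          rw [step, smul_mul_assoc, mul_smul_comm, pow_add]
          congr 1
          simp only [mul_assoc]
      _ = (∏ l : Fin (n+1), ∏ k ∈ Finset.Ioi l, c k l ^ (e k * f l)) •
            (w 0 ^ (e 0 + f 0) * (List.ofFn fun i => w i.succ ^ (e i.succ + f i.succ)).prod) := by
          rw [ih (fun i => w i.succ) (fun i => e i.succ) (fun i => f i.succ)
            (fun k l => c k.succ l.succ) (fun k l => h k.succ l.succ),
            mul_smul_comm, smul_smul]
          congr 2
          simp only [Fin.prod_univ_succ, Fin.prod_Ioi_zero, Fin.prod_Ioi_succ]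

lemma aux_sq_split {n : ℕ} (F : Fin n → Fin n → ℂ) (hd : ∀ k, F k k = 1) :
    (∏ k, ∏ l, F k l) = ∏ l, ∏ k ∈ Finset.Ioi l, (F k l * F l k) := by
  induction n with
  | zero => simp
  | succ n ih =>
    have IH := ih (fun k l => F k.succ l.succ) (fun k => hd k.succ)
    simp only [Finset.prod_mul_distrib] at IH
    simp only [Fin.prod_univ_succ, Fin.prod_Ioi_zero, Fin.prod_Ioi_succ, hd, one_mul,
      Finset.prod_mul_distrib]
    rw [IH]
    ring

end Aux

/-- Product rule for ordered monomials in the θ-deformed 2n-plane: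
`(z^p z̄^q)(z^r z̄^s) = (∏_{l<k} λ_{k,l}^{p_k r_l + q_k s_l + r_k q_l − q_k r_l}) • z^{p+r} z̄^{q+s}`. -/
theorem stmt_2 {A : Type*} [Ring A] [Algebra ℂ A] {n : ℕ}
    (θ : Fin n → Fin n → ℝ) (hθ : ∀ p q, θ p q = - θ q p)
    (z zbar : Fin n → A)
    (hzz : ∀ p q, z p * z q = Complex.exp (θ p q * Complex.I) • (z q * z p))
    (hbb : ∀ p q, zbar p * zbar q = Complex.exp (θ p q * Complex.I) • (zbar q * zbar p))
    (hbz : ∀ p q, zbar p * z q = Complex.exp (θ q p * Complex.I) • (z q * zbar p))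
    (p q r s : Fin n → ℕ) :
    ((List.ofFn fun i => z i ^ p i).prod * (List.ofFn fun i => zbar i ^ q i).prod) *
      ((List.ofFn fun i => z i ^ r i).prod * (List.ofFn fun i => zbar i ^ s i).prod) =
    (∏ l : Fin n, ∏ k ∈ Finset.Ioi l,
        Complex.exp (θ k l * Complex.I) ^
          ((p k * r l + q k * s l + r k * q l : ℤ) - q k * r l)) •
      ((List.ofFn fun i => z i ^ (p i + r i)).prod *
        (List.ofFn fun i => zbar i ^ (q i + s i)).prod) := by
  have h1 := aux_swap zbar z q r (fun k l => Complex.exp (θ l k * Complex.I))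
    (fun k l => hbz k l)
  have h2 := aux_merge z p r (fun k l => Complex.exp (θ k l * Complex.I)) hzz
  have h3 := aux_merge zbar q s (fun k l => Complex.exp (θ k l * Complex.I)) hbb
  have hsq := aux_sq_split (fun k l => Complex.exp (θ l k * Complex.I) ^ (q k * r l))
    (by
      intro k
      have h0 : θ k k = 0 := by have := hθ k k; linarith
      simp [h0])
  set Zp := (List.ofFn fun i => z i ^ p i).prod
  set Qb := (List.ofFn fun i => zbar i ^ q i).prod
  set Zr := (List.ofFn fun i => z i ^ r i).prod
  set Sb := (List.ofFn fun i => zbar i ^ s i).prod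
  rw [mul_assoc, ← mul_assoc Qb, h1, smul_mul_assoc, mul_smul_comm, mul_assoc Zr,
    ← mul_assoc Zp, h2, h3, smul_mul_assoc, mul_smul_comm, smul_smul, smul_smul]
  congr 1
  rw [hsq, ← Finset.prod_mul_distrib, ← Finset.prod_mul_distrib]
  refine Finset.prod_congr rfl fun l _ => ?_
  rw [← Finset.prod_mul_distrib, ← Finset.prod_mul_distrib]
  refine Finset.prod_congr rfl fun k hk => ?_
  rw [hθ l k, ← Complex.exp_nat_mul, ← Complex.exp_nat_mul, ← Complex.exp_nat_mul,
    ← Complex.exp_nat_mul, ← Complex.exp_int_mul, ← Complex.exp_add, ← Complex.exp_add,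
    ← Complex.exp_add]
  congr 1
  push_cast
  ring
end

section
/- Every projector (self-adjoint idempotent matrix) over the θ-deformed 2n-plane algebra C_alg(ℝ^{2n}_Θ) has all its entries in ℂ·1, i.e. P(C_alg(ℝ^{2n}_Θ)) = P(ℂ). -/
/-!
Expand the entries of `P` in the basis of ordered monomials `z^p zbar^q` and grade such a
monomial by its total exponent `p + q ∈ ℕⁿ`, ordered lexicographically. Any two generators
commute up to a phase, so monomials multiply up to a phase and `(z^p zbar^q)*` is `z^q zbar^p`
up to a phase; moreover every `z i * zbar i` is central, so that `z^p zbar^q (z^p zbar^q)*`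
only depends on `w = p + q`, and it is a phase times `z^w zbar^w`.

Let `w` be the largest grade occurring in `P`. In `P a a = ∑ j, P a j * star (P a j)` the
coefficient of `z^w zbar^w` on the right is a fixed nonzero number times the sum of `|c|²` over
the grade-`w` coefficients `c` of the row `a` (no cross term reaches `z^w zbar^w`), while on the
left it vanishes unless `w = 0`, since `z^w zbar^w` has grade `2 w`. Hence `w = 0`: every entry
is a multiple of `z^0 zbar^0 = 1`.
-/

open Complex ComplexConjugate

section

variable {A : Type*}

def PhaseEquiv [SMul Circle A] (a b : A) : Prop := ∃ c : Circle, a = c • b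

namespace PhaseEquiv

theorem refl [MulAction ℂ A] (a : A) : PhaseEquiv a a := ⟨1, (one_smul _ _).symm⟩

theorem symm [MulAction ℂ A] {a b : A} : PhaseEquiv a b → PhaseEquiv b a
  | ⟨c, h⟩ => ⟨c⁻¹, by rw [h, inv_smul_smul]⟩

theorem trans [MulAction ℂ A] {a b d : A} : PhaseEquiv a b → PhaseEquiv b d → PhaseEquiv a d
  | ⟨c, h⟩, ⟨c', h'⟩ => ⟨c * c', by rw [h, h', smul_smul]⟩

variable [Ring A] [Algebra ℂ A]

theorem mul {a a' b b' : A} : PhaseEquiv a a' → PhaseEquiv b b' → PhaseEquiv (a * b) (a' * b')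
  | ⟨c, h⟩, ⟨c', h'⟩ => ⟨c * c', by rw [h, h', smul_mul_smul_comm]⟩

theorem exists_repr_eq_single {ι : Type*} (B : Module.Basis ι ℂ A) {a : A} {i : ι} :
    PhaseEquiv a (B i) → ∃ c : Circle, B.repr a = Finsupp.single i (c : ℂ)
  | ⟨c, h⟩ => ⟨c, by rw [h, Circle.smul_def, map_smul, B.repr_self, Finsupp.smul_single_one]⟩

end PhaseEquiv

theorem List.Perm.prod_map_phaseEquiv [Ring A] [Algebra ℂ A] {ι : Type*} {g : ι → A}
    (hg : ∀ i j, PhaseEquiv (g i * g j) (g j * g i)) {l l' : List ι} (h : l.Perm l') :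
    PhaseEquiv (l.map g).prod (l'.map g).prod := by
  induction h with
  | nil => exact .refl _
  | cons x _ ih => exact (PhaseEquiv.refl _).mul ih
  | swap x y l =>
    simp only [List.map_cons, List.prod_cons, ← mul_assoc]
    exact (hg y x).mul (.refl _)
  | trans _ _ ih ih' => exact ih.trans ih'

theorem list_prod_map_mul_star [Ring A] [StarRing A] {ι : Type*} (g : ι → A)
    (hg : ∀ i j, Commute (g i * star (g i)) (star (g j))) (l : List ι) :
    (l.map g).prod * star (l.map g).prod = (l.map fun i => g i * star (g i)).prod := by
  induction l with
  | nil => simp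
  | cons i l ih =>
    have hc : Commute (l.map fun i => g i * star (g i)).prod (star (g i)) :=
      Commute.list_prod_left _ _ fun x hx => by
        obtain ⟨j, -, rfl⟩ := List.mem_map.1 hx
        exact hg j i
    simp only [List.map_cons, List.prod_cons, star_mul]
    rw [mul_assoc, ← mul_assoc (l.map g).prod, ih, mul_assoc (g i), hc.eq, ← mul_assoc]

theorem star_list_prod [Monoid A] [StarMul A] (l : List A) :
    star l.prod = (l.map star).reverse.prod := by
  induction l with
  | nil => simp
  | cons a l ih => simp [ih]

theorem Matrix.apply_self_eq_sum_mul_star {ι R : Type*} [Fintype ι] [Semiring R] [StarRing R]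
    {P : Matrix ι ι R} (hP : P * P = P) (hPs : P.conjTranspose = P) (a : ι) :
    P a a = ∑ j, P a j * star (P a j) := by
  calc P a a = (P * P.conjTranspose) a a := by rw [hPs, hP]
    _ = ∑ j, P a j * star (P a j) := by simp [Matrix.mul_apply]

namespace ThetaPlane

def word {n : ℕ} (p : Fin n → ℕ) : List (Fin n) :=
  (List.ofFn fun i => List.replicate (p i) i).flatten

theorem count_word {n : ℕ} (p : Fin n → ℕ) (i : Fin n) : (word p).count i = p i := by
  simp [word, List.count_flatten, List.count_replicate, List.sum_ofFn]

theorem prod_map_word [Monoid A] {n : ℕ} (f : Fin n → A) (p : Fin n → ℕ) :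
    ((word p).map f).prod = (List.ofFn fun i => f i ^ p i).prod := by
  simp [word, List.map_flatten, List.prod_flatten, Function.comp_def, List.map_ofFn]

theorem perm_word_add {n : ℕ} (p q : Fin n → ℕ) : (word p ++ word q).Perm (word (p + q)) :=
  List.perm_iff_count.2 fun i => by simp [count_word]

section Monomials

variable [Ring A] {n : ℕ} (z zbar : Fin n → A)

def orderedMonomial (p q : Fin n → ℕ) : A :=
  (List.ofFn fun i => z i ^ p i).prod * (List.ofFn fun i => zbar i ^ q i).prod

def monomialWord (p q : Fin n → ℕ) : List (Fin n ⊕ Fin n) :=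
  (word p).map Sum.inl ++ (word q).map Sum.inr

theorem orderedMonomial_eq_prod_map_monomialWord (p q : Fin n → ℕ) :
    orderedMonomial z zbar p q = ((monomialWord p q).map (Sum.elim z zbar)).prod := by
  simp [orderedMonomial, monomialWord, prod_map_word]

theorem perm_monomialWord_append (p q r s : Fin n → ℕ) :
    (monomialWord p q ++ monomialWord r s).Perm (monomialWord (p + r) (q + s)) := by
  -- the `BEq` instance that `Sum` derives is not known to be lawful
  refine (@List.perm_iff_count _ instBEqOfDecidableEq _ _ _).2 ?_
  rintro (i | i) <;> simp [monomialWord, List.count_map_of_injective, Sum.inl_injective,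
    Sum.inr_injective, count_word, List.count_eq_zero_of_not_mem]

theorem perm_reverse_map_swap_monomialWord (p q : Fin n → ℕ) :
    ((monomialWord p q).map Sum.swap).reverse.Perm (monomialWord q p) := by
  refine (List.reverse_perm _).trans ?_
  simpa [monomialWord, Function.comp_def] using List.perm_append_comm

variable {z zbar} [Algebra ℂ A]

theorem orderedMonomial_mul
    (hg : ∀ i j, PhaseEquiv (Sum.elim z zbar i * Sum.elim z zbar j)
      (Sum.elim z zbar j * Sum.elim z zbar i))
    (p q r s : Fin n → ℕ) :
    PhaseEquiv (orderedMonomial z zbar p q * orderedMonomial z zbar r s)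
      (orderedMonomial z zbar (p + r) (q + s)) := by
  simp only [orderedMonomial_eq_prod_map_monomialWord, ← List.prod_append, ← List.map_append]
  exact (perm_monomialWord_append p q r s).prod_map_phaseEquiv hg

theorem star_orderedMonomial [StarRing A]
    (hg : ∀ i j, PhaseEquiv (Sum.elim z zbar i * Sum.elim z zbar j)
      (Sum.elim z zbar j * Sum.elim z zbar i))
    (hstar : ∀ x, star (Sum.elim z zbar x) = Sum.elim z zbar x.swap) (p q : Fin n → ℕ) :
    PhaseEquiv (star (orderedMonomial z zbar p q)) (orderedMonomial z zbar q p) := by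
  have hswap : star ∘ Sum.elim z zbar = Sum.elim z zbar ∘ Sum.swap := funext hstar
  rw [orderedMonomial_eq_prod_map_monomialWord, star_list_prod, List.map_map, hswap,
    ← List.map_map, ← List.map_reverse, orderedMonomial_eq_prod_map_monomialWord]
  exact (perm_reverse_map_swap_monomialWord p q).prod_map_phaseEquiv hg

end Monomials

def weight {n : ℕ} (u : (Fin n → ℕ) × (Fin n → ℕ)) : Lex (Fin n → ℕ) := toLex (u.1 + u.2)

theorem eq_and_add_eq_of_add_swap_eq {n : ℕ} {u v : (Fin n → ℕ) × (Fin n → ℕ)}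
    {w : Fin n → ℕ} (hu : weight u ≤ toLex w) (hv : weight v ≤ toLex w)
    (huv : (u.1 + v.2, u.2 + v.1) = (w, w)) : u = v ∧ u.1 + u.2 = w := by
  obtain ⟨h1, h2⟩ := Prod.mk.inj huv
  have hsum : weight u + weight v = toLex w + toLex w :=
    congrArg toLex <| calc u.1 + u.2 + (v.1 + v.2) = (u.1 + v.2) + (u.2 + v.1) := by abel
      _ = w + w := by rw [h1, h2]
  obtain ⟨hu', -⟩ := (add_eq_add_iff_eq_and_eq hu hv).1 hsum
  have hu' : u.1 + u.2 = w := hu'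
  refine ⟨Prod.ext ?_ ?_, hu'⟩
  · exact (add_left_cancel (h2.trans (hu'.symm.trans (add_comm _ _)))).symm
  · exact (add_left_cancel (h1.trans hu'.symm)).symm

theorem eq_algebraMap_of_support_repr_subset [Ring A] [Algebra ℂ A] {n : ℕ}
    {z zbar : Fin n → A} (B : Module.Basis ((Fin n → ℕ) × (Fin n → ℕ)) ℂ A)
    (hB : ∀ p q, B (p, q) = orderedMonomial z zbar p q) {x : A}
    (hx : (B.repr x).support ⊆ {0}) : x = algebraMap ℂ A (B.repr x 0) := by
  have hone : B 0 = 1 := by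
    rw [← Prod.mk_zero_zero, hB]
    simp [orderedMonomial]
  rw [Algebra.algebraMap_eq_smul_one, ← hone, ← B.repr_symm_single,
    ← Finsupp.support_subset_singleton.1 hx, LinearEquiv.symm_apply_apply]

/-- The defining relations of `C_alg(ℝ^{2n}_Θ)`, with `λ_{p,q} = Circle.exp (θ p q)`. -/
structure IsThetaPlane [Ring A] [StarRing A] [Algebra ℂ A] {n : ℕ} (θ : Fin n → Fin n → ℝ)
    (z zbar : Fin n → A) : Prop where
  skew : ∀ p q, θ p q = -θ q p
  z_mul_z : ∀ p q, z p * z q = Circle.exp (θ p q) • (z q * z p)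
  zbar_mul_zbar : ∀ p q, zbar p * zbar q = Circle.exp (θ p q) • (zbar q * zbar p)
  zbar_mul_z : ∀ p q, zbar p * z q = Circle.exp (θ q p) • (z q * zbar p)
  star_z : ∀ p, star (z p) = zbar p

namespace IsThetaPlane

variable [Ring A] [StarRing A] [Algebra ℂ A] {n : ℕ} {θ : Fin n → Fin n → ℝ}
  {z zbar : Fin n → A}

theorem phaseEquiv_mul_comm (h : IsThetaPlane θ z zbar) (i j : Fin n ⊕ Fin n) :
    PhaseEquiv (Sum.elim z zbar i * Sum.elim z zbar j)
      (Sum.elim z zbar j * Sum.elim z zbar i) := by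
  rcases i with i | i <;> rcases j with j | j
  · exact ⟨_, h.z_mul_z i j⟩
  · exact PhaseEquiv.symm ⟨_, h.zbar_mul_z j i⟩
  · exact ⟨_, h.zbar_mul_z i j⟩
  · exact ⟨_, h.zbar_mul_zbar i j⟩

theorem star_elim (h : IsThetaPlane θ z zbar) (x : Fin n ⊕ Fin n) :
    star (Sum.elim z zbar x) = Sum.elim z zbar x.swap := by
  rcases x with i | i
  · exact h.star_z i
  · rw [Sum.elim_inr, ← h.star_z, star_star]
    rfl

theorem zbar_mul_z_self (h : IsThetaPlane θ z zbar) (i : Fin n) :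
    zbar i * z i = z i * zbar i := by
  have hθ : θ i i = 0 := by linarith [h.skew i i]
  rw [h.zbar_mul_z, hθ, Circle.exp_zero, one_smul]

theorem elim_mul_star_elim (h : IsThetaPlane θ z zbar) (x : Fin n ⊕ Fin n) :
    Sum.elim z zbar x * star (Sum.elim z zbar x) = z (x.elim id id) * zbar (x.elim id id) := by
  rcases x with i | i
  · exact congrArg (z i * ·) (h.star_z i)
  · rw [h.star_elim]
    exact h.zbar_mul_z_self i

theorem commute_z_mul_zbar (h : IsThetaPlane θ z zbar) (i : Fin n) (x : Fin n ⊕ Fin n) :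
    Commute (z i * zbar i) (Sum.elim z zbar x) := by
  rcases x with j | j
  · have hphase : Circle.exp (θ j i) * Circle.exp (θ i j) = 1 := by
      rw [← Circle.exp_add, h.skew j i, neg_add_cancel, Circle.exp_zero]
    show z i * zbar i * z j = z j * (z i * zbar i)
    rw [mul_assoc, h.zbar_mul_z, mul_smul_comm, ← mul_assoc, h.z_mul_z, smul_mul_assoc,
      smul_smul, hphase, one_smul, mul_assoc]
  · have hz : z i * zbar j = (Circle.exp (θ i j))⁻¹ • (zbar j * z i) := by
      rw [h.zbar_mul_z, inv_smul_smul]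
    show z i * zbar i * zbar j = zbar j * (z i * zbar i)
    rw [mul_assoc, h.zbar_mul_zbar, mul_smul_comm, ← mul_assoc, hz, smul_mul_assoc,
      smul_smul, mul_inv_cancel, one_smul, mul_assoc]

theorem orderedMonomial_mul_star_self (h : IsThetaPlane θ z zbar) (p q : Fin n → ℕ) :
    orderedMonomial z zbar p q * star (orderedMonomial z zbar p q)
      = (List.ofFn fun i => (z i * zbar i) ^ (p + q) i).prod := by
  have hcomm : ∀ x y, Commute (Sum.elim z zbar x * star (Sum.elim z zbar x))
      (star (Sum.elim z zbar y)) := fun x y => by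
    rw [h.elim_mul_star_elim, h.star_elim]
    exact h.commute_z_mul_zbar _ _
  have hpair : ∀ i j, Commute (z i * zbar i) (z j * zbar j) := fun i j =>
    (h.commute_z_mul_zbar i (.inl j)).mul_right (h.commute_z_mul_zbar i (.inr j))
  have hword : (monomialWord p q).map (fun x => z (x.elim id id) * zbar (x.elim id id))
      = (word p ++ word q).map fun i => z i * zbar i := by
    simp [monomialWord, Function.comp_def]
  rw [orderedMonomial_eq_prod_map_monomialWord, list_prod_map_mul_star _ hcomm]
  simp only [h.elim_mul_star_elim]
  rw [hword, ((perm_word_add p q).map _).prod_eq'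
    (List.pairwise_map.2 (List.pairwise_of_forall fun _ _ => hpair _ _)), prod_map_word]

theorem orderedMonomial_mul_star (h : IsThetaPlane θ z zbar) (p q r s : Fin n → ℕ) :
    PhaseEquiv (orderedMonomial z zbar p q * star (orderedMonomial z zbar r s))
      (orderedMonomial z zbar (p + s) (q + r)) :=
  ((PhaseEquiv.refl _).mul (star_orderedMonomial h.phaseEquiv_mul_comm h.star_elim r s)).trans
    (orderedMonomial_mul h.phaseEquiv_mul_comm p q s r)

variable (B : Module.Basis ((Fin n → ℕ) × (Fin n → ℕ)) ℂ A)

theorem repr_orderedMonomial_mul_star_ne_zero (h : IsThetaPlane θ z zbar)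
    (hB : ∀ p q, B (p, q) = orderedMonomial z zbar p q) (w : Fin n → ℕ) :
    B.repr (orderedMonomial z zbar w 0 * star (orderedMonomial z zbar w 0)) (w, w) ≠ 0 := by
  have hph : PhaseEquiv (orderedMonomial z zbar w 0 * star (orderedMonomial z zbar w 0))
      (B (w, w)) := by
    simpa [hB] using h.orderedMonomial_mul_star w 0 w 0
  obtain ⟨c, hc⟩ := hph.exists_repr_eq_single B
  rw [hc, Finsupp.single_eq_same]
  exact c.coe_ne_zero

theorem repr_basis_mul_star_basis (h : IsThetaPlane θ z zbar)
    (hB : ∀ p q, B (p, q) = orderedMonomial z zbar p q) {u v : (Fin n → ℕ) × (Fin n → ℕ)}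
    {w : Fin n → ℕ} (hu : weight u ≤ toLex w) (hv : weight v ≤ toLex w) :
    B.repr (B u * star (B v)) (w, w) = if u = v ∧ u.1 + u.2 = w then
      B.repr (orderedMonomial z zbar w 0 * star (orderedMonomial z zbar w 0)) (w, w) else 0 := by
  split_ifs with huv
  · obtain ⟨rfl, hw⟩ := huv
    rw [hB, h.orderedMonomial_mul_star_self, h.orderedMonomial_mul_star_self, hw, add_zero]
  · have hph : PhaseEquiv (B u * star (B v)) (B (u.1 + v.2, u.2 + v.1)) := by
      simpa only [hB] using h.orderedMonomial_mul_star u.1 u.2 v.1 v.2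
    obtain ⟨c, hc⟩ := hph.exists_repr_eq_single B
    rw [hc, Finsupp.single_apply,
      if_neg fun huv' => huv (eq_and_add_eq_of_add_swap_eq hu hv huv')]

theorem repr_mul_star_apply [StarModule ℂ A] (h : IsThetaPlane θ z zbar)
    (hB : ∀ p q, B (p, q) = orderedMonomial z zbar p q) {w : Fin n → ℕ} (x : A)
    (hx : ∀ u ∈ (B.repr x).support, weight u ≤ toLex w) :
    B.repr (x * star x) (w, w) =
      B.repr (orderedMonomial z zbar w 0 * star (orderedMonomial z zbar w 0)) (w, w) *
        ∑ u ∈ (B.repr x).support with u.1 + u.2 = w, (normSq (B.repr x u) : ℂ) := by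
  set c := B.repr (orderedMonomial z zbar w 0 * star (orderedMonomial z zbar w 0)) (w, w)
  set s := (B.repr x).support
  set f := B.repr x
  have hexp : x = ∑ u ∈ s, f u • B u := by
    conv_lhs => rw [← B.linearCombination_repr x]
    rfl
  have hdiag : ∀ u ∈ s, ∑ v ∈ s, f u * conj (f v) * B.repr (B u * star (B v)) (w, w)
      = if u.1 + u.2 = w then c * (normSq (f u) : ℂ) else 0 := by
    intro u hu
    rw [Finset.sum_eq_single_of_mem u hu fun v hv hvu => by
      rw [h.repr_basis_mul_star_basis B hB (hx u hu) (hx v hv),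
        if_neg fun h' => hvu h'.1.symm, mul_zero]]
    rw [h.repr_basis_mul_star_basis B hB (hx u hu) (hx u hu), Complex.mul_conj]
    simp only [true_and]
    split_ifs <;> ring
  calc B.repr (x * star x) (w, w)
      = ∑ u ∈ s, ∑ v ∈ s, f u * conj (f v) * B.repr (B u * star (B v)) (w, w) := by
        conv_lhs => rw [hexp]
        simp only [star_sum, star_smul, Finset.sum_mul_sum, smul_mul_smul_comm, map_sum,
          map_smul, Finsupp.finsetSum_apply, Finsupp.smul_apply, smul_eq_mul, Complex.star_def]
    _ = c * ∑ u ∈ s with u.1 + u.2 = w, (normSq (f u) : ℂ) := by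
        rw [Finset.sum_congr rfl hdiag, Finset.mul_sum, Finset.sum_filter]

theorem repr_eq_zero_of_repr_sum_mul_star_eq_zero [StarModule ℂ A] (h : IsThetaPlane θ z zbar)
    (hB : ∀ p q, B (p, q) = orderedMonomial z zbar p q) {ι : Type*} (s : Finset ι)
    (x : ι → A) {w : Fin n → ℕ}
    (hx : ∀ j ∈ s, ∀ u ∈ (B.repr (x j)).support, weight u ≤ toLex w)
    (h0 : B.repr (∑ j ∈ s, x j * star (x j)) (w, w) = 0) {j : ι} (hj : j ∈ s)
    {u : (Fin n → ℕ) × (Fin n → ℕ)} (hu : u.1 + u.2 = w) : B.repr (x j) u = 0 := by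
  rw [map_sum, Finsupp.finsetSum_apply,
    Finset.sum_congr rfl fun j hj => h.repr_mul_star_apply B hB _ (hx j hj), ← Finset.mul_sum]
    at h0
  have hsum : ∑ j ∈ s, ∑ u ∈ (B.repr (x j)).support with u.1 + u.2 = w,
      normSq (B.repr (x j) u) = 0 := by
    exact_mod_cast (mul_eq_zero.1 h0).resolve_left
      (h.repr_orderedMonomial_mul_star_ne_zero B hB w)
  by_contra hne
  have hrow := (Finset.sum_eq_zero_iff_of_nonneg fun j _ =>
    Finset.sum_nonneg fun u _ => normSq_nonneg _).1 hsum j hj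
  have hu' := (Finset.sum_eq_zero_iff_of_nonneg fun _ _ => normSq_nonneg _).1 hrow u
    (Finset.mem_filter.2 ⟨Finsupp.mem_support_iff.2 hne, hu⟩)
  exact hne (normSq_eq_zero.1 hu')

theorem eq_zero_of_mem_support_repr [StarModule ℂ A] (h : IsThetaPlane θ z zbar)
    (hB : ∀ p q, B (p, q) = orderedMonomial z zbar p q) {ι : Type*} [Fintype ι]
    (P : Matrix ι ι A) (hP : ∀ a, P a a = ∑ j, P a j * star (P a j)) {a b : ι}
    {u : (Fin n → ℕ) × (Fin n → ℕ)} (hu : u ∈ (B.repr (P a b)).support) : u = 0 := by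
  classical
  set W := Finset.univ.biUnion fun ab : ι × ι => (B.repr (P ab.1 ab.2)).support.image weight
  have hmemW : ∀ a b, ∀ u ∈ (B.repr (P a b)).support, weight u ∈ W := fun a b u hu =>
    Finset.mem_biUnion.2 ⟨(a, b), Finset.mem_univ _, Finset.mem_image_of_mem _ hu⟩
  have hW : W.Nonempty := ⟨_, hmemW a b u hu⟩
  set w := ofLex (W.max' hW)
  have hle : ∀ a b, ∀ u ∈ (B.repr (P a b)).support, weight u ≤ toLex w := fun a b u hu =>
    W.le_max' _ (hmemW a b u hu)
  have hw : w = 0 := by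
    by_contra hw
    have hpos : 0 < toLex w :=
      lt_of_le_of_ne (Pi.toLex_monotone fun i => Nat.zero_le (w i)) fun h0 => hw h0.symm
    obtain ⟨⟨a, b⟩, -, hab⟩ := Finset.mem_biUnion.1 (W.max'_mem hW)
    obtain ⟨v, hv, hvw⟩ := Finset.mem_image.1 hab
    have hdiag : B.repr (P a a) (w, w) = 0 := by
      by_contra hne
      exact (hle a a (w, w) (Finsupp.mem_support_iff.2 hne)).not_gt
        (lt_add_of_pos_right _ hpos)
    rw [hP a] at hdiag
    exact Finsupp.mem_support_iff.1 hv <| h.repr_eq_zero_of_repr_sum_mul_star_eq_zero B hB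
      Finset.univ (P a) (fun j _ => hle a j) hdiag (Finset.mem_univ b) (congrArg ofLex hvw)
  have hu0 : u.1 + u.2 = 0 := by
    refine congrArg ofLex (le_antisymm ?_ (Pi.toLex_monotone fun i => Nat.zero_le _))
    have := hle a b u hu
    rwa [hw] at this
  obtain ⟨h1, h2⟩ := add_eq_zero.1 hu0
  exact Prod.ext h1 h2

end IsThetaPlane

end ThetaPlane

end

/-- Every projector (self-adjoint idempotent matrix) over the θ-deformed
2n-plane algebra `C_alg(ℝ^{2n}_Θ)` (characterized by its generators, relations, and its
basis of ordered monomials) has all its entries in `ℂ·1`. -/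
theorem stmt_7 {A : Type*} [Ring A] [StarRing A] [Algebra ℂ A] [StarModule ℂ A] {n : ℕ}
    (θ : Fin n → Fin n → ℝ) (hθ : ∀ p q, θ p q = - θ q p)
    (z zbar : Fin n → A)
    (hzz : ∀ p q, z p * z q = Complex.exp (θ p q * Complex.I) • (z q * z p))
    (hbb : ∀ p q, zbar p * zbar q = Complex.exp (θ p q * Complex.I) • (zbar q * zbar p))
    (hbz : ∀ p q, zbar p * z q = Complex.exp (θ q p * Complex.I) • (z q * zbar p))
    (hstarz : ∀ p, star (z p) = zbar p)
    (B : Module.Basis ((Fin n → ℕ) × (Fin n → ℕ)) ℂ A)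
    (hB : ∀ p q : Fin n → ℕ, B (p, q) =
      (List.ofFn fun i => z i ^ p i).prod * (List.ofFn fun i => zbar i ^ q i).prod) :
    ∀ (N : ℕ) (P : Matrix (Fin N) (Fin N) A),
      P * P = P → P.conjTranspose = P →
      ∀ k l, ∃ c : ℂ, P k l = algebraMap ℂ A c := by
  intro N P hP hPs k l
  have h : ThetaPlane.IsThetaPlane θ z zbar :=
    { skew := hθ
      z_mul_z := by simpa only [Circle.smul_def, Circle.coe_exp] using hzz
      zbar_mul_zbar := by simpa only [Circle.smul_def, Circle.coe_exp] using hbb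
      zbar_mul_z := by simpa only [Circle.smul_def, Circle.coe_exp] using hbz
      star_z := hstarz }
  exact ⟨_, ThetaPlane.eq_algebraMap_of_support_repr_subset B hB fun u hu =>
    Finset.mem_singleton.2 <| h.eq_zero_of_mem_support_repr B hB P
      (Matrix.apply_self_eq_sum_mul_star hP hPs) hu⟩
end
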